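/- arXiv:2409.08413 — 2 statements merged into one kernel-verified Lean document; each statement's English description precedes it below -/
import Mathlib

section
/- Under 2s-sparse observability (for every subset Λ ⊆ Fin p with |Λ| = p−2s, the stacked map O_Λ is injective), with p > 2s and x_true a plausible initial state consistent with some intact (p−s)-subset, the set of plausible initial states equals {x_true}. -/
/-!
Two plausible states agree on the sensors of two intact (p − s)-subsets, and any two such
subsets share at least p − 2s sensors; 2s-sparse observability makes the measurements on
those shared sensors determine the state.
-/

theorem Finset.card_add_card_sub_card_le_card_inter {α : Type*} [Fintype α] [DecidableEq α]
    (s t : Finset α) : s.card + t.card - Fintype.card α ≤ (s ∩ t).card := by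
  rw [Finset.card_inter]
  exact Nat.sub_le_sub_left (Finset.card_le_univ _) _

theorem eq_of_forall_mem_apply_eq {ι α β : Type*} {f : ι → α → β} {k : ℕ}
    (hf : ∀ Λ : Finset ι, Λ.card = k → Function.Injective (fun x (i : {i // i ∈ Λ}) => f i x))
    {Δ : Finset ι} (hΔ : k ≤ Δ.card) {x y : α} (hxy : ∀ i ∈ Δ, f i x = f i y) : x = y := by
  obtain ⟨Λ, hΛΔ, hΛ⟩ := Finset.exists_subset_card_eq hΔ
  exact hf Λ hΛ (funext fun i => hxy i (hΛΔ i.2))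

theorem stmt_6_general {p s t n : ℕ}
    (O : Fin p → Matrix (Fin (t + 1)) (Fin n) ℝ)
    (Y : Fin p → Fin (t + 1) → ℝ)
    (hobs : ∀ Λ : Finset (Fin p), Λ.card = p - 2 * s →
      Function.Injective (fun x : Fin n → ℝ =>
        fun i : {i // i ∈ Λ} => (O i.1).mulVec x))
    (xtrue : Fin n → ℝ) (Γ₀ : Finset (Fin p)) (hΓ₀ : Γ₀.card = p - s)
    (htrue : ∀ i ∈ Γ₀, (O i).mulVec xtrue = Y i) :
    {x : Fin n → ℝ | ∃ Γ : Finset (Fin p), Γ.card = p - s ∧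
      ∀ i ∈ Γ, (O i).mulVec x = Y i} = {xtrue} := by
  ext x
  constructor
  · rintro ⟨Γ, hΓ, hx⟩
    have hshared : p - 2 * s ≤ (Γ ∩ Γ₀).card := by
      have := Finset.card_add_card_sub_card_le_card_inter Γ Γ₀
      rw [hΓ, hΓ₀, Fintype.card_fin] at this
      omega
    refine eq_of_forall_mem_apply_eq (f := fun i => (O i).mulVec) hobs hshared fun i hi => ?_
    rw [Finset.mem_inter] at hi
    rw [hx i hi.1, htrue i hi.2]
  · rintro rfl
    exact ⟨Γ₀, hΓ₀, htrue⟩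

theorem stmt_6 {p s t n : ℕ} (hp : 2 * s < p)
    (O : Fin p → Matrix (Fin (t + 1)) (Fin n) ℝ)
    (Y : Fin p → Fin (t + 1) → ℝ)
    (hobs : ∀ Λ : Finset (Fin p), Λ.card = p - 2 * s →
      Function.Injective (fun x : Fin n → ℝ =>
        fun i : {i // i ∈ Λ} => (O i.1).mulVec x))
    (xtrue : Fin n → ℝ) (Γ₀ : Finset (Fin p)) (hΓ₀ : Γ₀.card = p - s)
    (htrue : ∀ i ∈ Γ₀, (O i).mulVec xtrue = Y i) :
    {x : Fin n → ℝ | ∃ Γ : Finset (Fin p), Γ.card = p - s ∧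
      ∀ i ∈ Γ, (O i).mulVec x = Y i} = {xtrue} :=
  stmt_6_general O Y hobs xtrue Γ₀ hΓ₀ htrue
end

section
/- If the system is not s-sparse observable, i.e., there exists a subset Γ₀ ⊆ Fin p of cardinality p−s such that the stacked map O_{Γ₀} : ℝⁿ → (Fin Γ₀ → ℝ^{t+1}) is not injective, then there exists a choice of measurement data Y (consistent with some true state and with all sensors in Γ₀ intact) such that the set of plausible initial states is infinite. -/
theorem stmt_7 {p s t n : ℕ} (hsp : s ≤ p) (hn : 1 ≤ n)
    (O : Fin p → Matrix (Fin (t + 1)) (Fin n) ℝ)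
    (Γ₀ : Finset (Fin p)) (hΓ₀ : Γ₀.card = p - s)
    (hnotinj : ¬ Function.Injective (fun x : Fin n → ℝ =>
      fun i : {i // i ∈ Γ₀} => (O i.1).mulVec x))
    (xtrue : Fin n → ℝ) :
    ∃ Y : Fin p → Fin (t + 1) → ℝ,
      (∀ i ∈ Γ₀, Y i = (O i).mulVec xtrue) ∧
      {x : Fin n → ℝ | ∃ Γ : Finset (Fin p), Γ.card = p - s ∧
        ∀ i ∈ Γ, (O i).mulVec x = Y i}.Infinite := by
  simp only [Function.Injective, not_forall] at hnotinj
  obtain ⟨a, b, hab, hne⟩ := hnotinj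
  set d : Fin n → ℝ := a - b with hd
  have hdne : d ≠ 0 := sub_ne_zero.mpr hne
  have hker : ∀ i ∈ Γ₀, (O i).mulVec d = 0 := by
    intro i hi
    have := congrFun hab ⟨i, hi⟩
    simp only at this
    rw [hd, Matrix.mulVec_sub, this, sub_self]
  refine ⟨fun i => (O i).mulVec xtrue, fun i _ => rfl, ?_⟩
  have hsub : Set.range (fun c : ℝ => xtrue + c • d) ⊆
      {x : Fin n → ℝ | ∃ Γ : Finset (Fin p), Γ.card = p - s ∧
        ∀ i ∈ Γ, (O i).mulVec x = (O i).mulVec xtrue} := by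
    rintro _ ⟨c, rfl⟩
    exact ⟨Γ₀, hΓ₀, fun i hi => by
      rw [Matrix.mulVec_add, Matrix.mulVec_smul, hker i hi, smul_zero, add_zero]⟩
  refine Set.Infinite.mono hsub ?_
  apply Set.infinite_range_of_injective
  intro c₁ c₂ h
  have : c₁ • d = c₂ • d := by
    have := congrArg (· - xtrue) h
    simpa using this
  exact smul_left_injective ℝ hdne this
end
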